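/- arXiv:2502.08840 — 2 statements merged into one kernel-verified Lean document; each statement's English description precedes it below -/
import Mathlib

section
/- Let G be a graph and let C₁, …, C_m be the 2-connected components of the clique hypergraph Cli(G) (with respect to the relation that two hyperedges are 2-adjacent if they share at least 2 vertices). If Proj(Cli(G)) = G, then a d-uniform hypergraph H satisfies Proj(H) = G if and only if H = H₁ ∪ ⋯ ∪ H_m where each Hᵢ ⊆ Cᵢ and Proj(Hᵢ) = Proj(Cᵢ). -/
/-- The projection of a hypergraph (given as a set of hyperedges). -/
def proj {V : Type*} (H : Set (Finset V)) : SimpleGraph V where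
  Adj i j := i ≠ j ∧ ∃ h ∈ H, i ∈ h ∧ j ∈ h
  symm := by constructor; rintro i j ⟨hij, h, hH, hi, hj⟩; exact ⟨hij.symm, h, hH, hj, hi⟩
  loopless := by constructor; rintro i ⟨hii, -⟩; exact hii rfl

/-- The clique hypergraph of `G`: all `d`-subsets forming cliques in `G`. -/
def cli {V : Type*} (G : SimpleGraph V) (d : ℕ) : Set (Finset V) :=
  {h | h.card = d ∧ ∀ i ∈ h, ∀ j ∈ h, i ≠ j → G.Adj i j}

/-- Two hyperedges of `K` are 2-adjacent if they share at least two vertices. -/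
def twoAdj {V : Type*} [DecidableEq V] (K : Set (Finset V)) (a b : Finset V) : Prop :=
  a ∈ K ∧ b ∈ K ∧ 2 ≤ (a ∩ b).card

/-- The 2-connected component of a hyperedge `h` in the hypergraph `K`. -/
def component {V : Type*} [DecidableEq V] (K : Set (Finset V)) (h : Finset V) :
    Set (Finset V) :=
  {h' ∈ K | Relation.ReflTransGen (twoAdj K) h h'}

/-- The set of 2-connected components of the hypergraph `K`. -/
def comps {V : Type*} [DecidableEq V] (K : Set (Finset V)) : Set (Set (Finset V)) :=
  {C | ∃ h ∈ K, C = component K h}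

/-!
A hypergraph `H` with `Proj(H) = G` consists of `d`-cliques of `G`, so it lies inside `Cli(G)`.
Every edge `ij` of `Proj(C)`, for a component `C`, is covered by some hyperedge of `H`; that
hyperedge shares `i` and `j` with a hyperedge of `C`, so it is 2-adjacent to it and lies in `C`
itself. Hence `H ∩ C` already projects onto `Proj(C)`. Conversely, projection commutes with
unions, and the components cover `Cli(G)`.
-/

section Projection

variable {V : Type*}

theorem proj_adj {H : Set (Finset V)} {i j : V} :
    (proj H).Adj i j ↔ i ≠ j ∧ ∃ h ∈ H, i ∈ h ∧ j ∈ h :=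
  Iff.rfl

theorem proj_mono {H H' : Set (Finset V)} (hHH' : H ⊆ H') : proj H ≤ proj H' :=
  fun _ _ ⟨hij, h, hh, hi, hj⟩ => ⟨hij, h, hHH' hh, hi, hj⟩

theorem proj_iUnion {ι : Sort*} (H : ι → Set (Finset V)) :
    proj (⋃ k, H k) = ⨆ k, proj (H k) := by
  ext i j
  simp only [SimpleGraph.iSup_adj, proj_adj, Set.mem_iUnion]
  aesop

theorem subset_cli_of_proj_le {G : SimpleGraph V} {d : ℕ} {H : Set (Finset V)}
    (hU : ∀ h ∈ H, h.card = d) (hH : proj H ≤ G) : H ⊆ cli G d :=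
  fun h hh => ⟨hU h hh, fun _ hi _ hj hij => hH ⟨hij, h, hh, hi, hj⟩⟩

section Components

variable [DecidableEq V] {K : Set (Finset V)}

theorem twoAdj_of_mem {a b : Finset V} (ha : a ∈ K) (hb : b ∈ K) {i j : V} (hij : i ≠ j)
    (hia : i ∈ a) (hja : j ∈ a) (hib : i ∈ b) (hjb : j ∈ b) : twoAdj K a b := by
  refine ⟨ha, hb, ?_⟩
  have : 1 < (a ∩ b).card :=
    Finset.one_lt_card.mpr
      ⟨i, Finset.mem_inter.mpr ⟨hia, hib⟩, j, Finset.mem_inter.mpr ⟨hja, hjb⟩, hij⟩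
  omega

theorem mem_component_self {h : Finset V} (hh : h ∈ K) : h ∈ component K h :=
  ⟨hh, Relation.ReflTransGen.refl⟩

theorem mem_component_of_twoAdj {h₀ a b : Finset V} (ha : a ∈ component K h₀)
    (hab : twoAdj K a b) : b ∈ component K h₀ :=
  ⟨hab.2.1, ha.2.tail hab⟩

theorem biUnion_comps : ⋃ C ∈ comps K, C = K := by
  apply Set.Subset.antisymm
  · rintro h hh
    obtain ⟨C, ⟨h₀, -, rfl⟩, hhC⟩ := Set.mem_iUnion₂.mp hh
    exact hhC.1
  · exact fun h hh => Set.mem_iUnion₂.mpr ⟨_, ⟨h, hh, rfl⟩, mem_component_self hh⟩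

theorem proj_inter_component {H : Set (Finset V)} (hHK : H ⊆ K) (hproj : proj K ≤ proj H)
    (h₀ : Finset V) : proj (H ∩ component K h₀) = proj (component K h₀) := by
  refine le_antisymm (proj_mono Set.inter_subset_right) ?_
  rintro i j ⟨hij, a, haC, hia, hja⟩
  obtain ⟨-, b, hbH, hib, hjb⟩ := hproj ⟨hij, a, haC.1, hia, hja⟩
  have hab : twoAdj K a b := twoAdj_of_mem haC.1 (hHK hbH) hij hia hja hib hjb
  exact ⟨hij, b, ⟨hbH, mem_component_of_twoAdj haC hab⟩, hib, hjb⟩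

end Components

end Projection

/-- Decomposition of preimages across 2-connected components of the clique hypergraph:
assuming `Proj(Cli(G)) = G`, a `d`-uniform hypergraph `H` projects to `G` iff it is a union
`⋃ᵢ Hᵢ` with `Hᵢ ⊆ Cᵢ` and `Proj(Hᵢ) = Proj(Cᵢ)` over the 2-connected components `Cᵢ` of
`Cli(G)`. -/
theorem preimage_decomposition {V : Type*} [DecidableEq V] (d : ℕ) (G : SimpleGraph V)
    (hG : proj (cli G d) = G) (H : Set (Finset V)) (hU : ∀ h ∈ H, h.card = d) :
    proj H = G ↔
      ∃ f : Set (Finset V) → Set (Finset V),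
        (∀ C ∈ comps (cli G d), f C ⊆ C ∧ proj (f C) = proj C) ∧
        H = ⋃ C ∈ comps (cli G d), f C := by
  constructor
  · intro hH
    have hHK : H ⊆ cli G d := subset_cli_of_proj_le hU hH.le
    refine ⟨fun C => H ∩ C, ?_, ?_⟩
    · rintro C ⟨h₀, -, rfl⟩
      exact ⟨Set.inter_subset_right, proj_inter_component hHK (hG.trans hH.symm).le h₀⟩
    · rw [← Set.inter_iUnion₂, biUnion_comps, Set.inter_eq_left.mpr hHK]
  · rintro ⟨f, hf, rfl⟩
    calc proj (⋃ C ∈ comps (cli G d), f C)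
        = ⨆ C ∈ comps (cli G d), proj (f C) := by simp only [proj_iUnion]
      _ = ⨆ C ∈ comps (cli G d), proj C := biSup_congr fun C hC => (hf C hC).2
      _ = proj (⋃ C ∈ comps (cli G d), C) := by simp only [proj_iUnion]
      _ = G := by rw [biUnion_comps, hG]
end

section
/- Let H_b be the d-uniform hypergraph consisting of the hyperedge {v₁,…,v_d} together with, for each pair {i,j} ⊆ [d], a hyperedge {v_i, v_j, u_{ij}^{(1)}, …, u_{ij}^{(d−2)}} where all u-vertices are distinct new vertices. Then H_b has C(d,2)+1 hyperedges, d + C(d,2)(d−2) vertices, and m(H_b) = e_{H_b}/v_{H_b} = (C(d,2)+1)/(d + C(d,2)(d−2)); that is, the edge-to-vertex ratio of H_b itself attains the maximum over all its sub-hypergraphs. -/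
/-- Vertex type for the hypergraph `H_b`: the `d` core vertices `v₁,…,v_d` plus, for each
pair `p` of core vertices, `d-2` private vertices. -/
abbrev Vb (d : ℕ) := Fin d ⊕ (Finset (Fin d) × Fin (d - 2))

/-- The hyperedge associated to a pair `p = {i,j}`: it contains `v_i, v_j` together with
the `d-2` private vertices `u_{ij}^{(1)},…,u_{ij}^{(d-2)}`. -/
def hEdge (d : ℕ) (p : Finset (Fin d)) : Finset (Vb d) :=
  p.image Sum.inl ∪ Finset.univ.image (fun k : Fin (d - 2) => Sum.inr (p, k))

/-- The hypergraph `H_b`: the hyperedge `{v₁,…,v_d}` together with a hyperedge for each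
pair `{i,j} ⊆ [d]`. -/
def Hb (d : ℕ) : Finset (Finset (Vb d)) :=
  insert (Finset.univ.image Sum.inl)
    ((Finset.univ.powersetCard 2).image (hEdge d))

/-!
Every sub-hypergraph `K'` consists of some pair edges `{hEdge p | p ∈ S}`, possibly together
with the core edge `{v₁,…,v_d}`. With `s = |S|` and `N = C(d,2)`, its density is
`(s + 1) / (d + s(d-2))` if it contains the core edge, which increases with `s`, and otherwise
`s / (t + s(d-2))`, where `t ≥ 2` counts the core vertices covered by the pairs of `S`; both are
at most `(N + 1) / (d + N(d-2))` because `s ≤ N`.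
-/

open Finset

lemma natCast_div_le_natCast_div {a b c e : ℕ} (hb : 0 < b) (he : 0 < e) (h : a * e ≤ c * b) :
    (a / b : ℚ) ≤ c / e := by
  rw [div_le_div_iff₀ (by positivity) (by positivity)]
  exact_mod_cast h

lemma succ_div_add_mul_le {s N c d : ℕ} (hd : 0 < d) (hcd : c ≤ d) (hsN : s ≤ N) :
    ((s + 1 : ℕ) / (d + s * c : ℕ) : ℚ) ≤ (N + 1 : ℕ) / (d + N * c : ℕ) :=
  natCast_div_le_natCast_div (by positivity) (by positivity) <| by
    nlinarith [Nat.mul_le_mul hsN hcd]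

lemma div_add_mul_le {s N c d t : ℕ} (hd : 0 < d) (hdc : d ≤ c + 2) (ht : 2 ≤ t)
    (hsN : s ≤ N) :
    ((s : ℕ) / (t + s * c : ℕ) : ℚ) ≤ (N + 1 : ℕ) / (d + N * c : ℕ) := by
  rcases Nat.eq_zero_or_pos s with rfl | hs
  · simp only [Nat.cast_zero, zero_div]
    positivity
  refine natCast_div_le_natCast_div (by positivity) (by positivity) ?_
  nlinarith [Nat.mul_le_mul_left s hdc]

lemma le_card_sup_of_subset_powersetCard {α : Type*} [DecidableEq α] {k : ℕ} {s : Finset α}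
    {S : Finset (Finset α)} (hS : S ⊆ s.powersetCard k) (hne : S.Nonempty) :
    k ≤ (S.sup id).card := by
  obtain ⟨p, hp⟩ := hne
  calc k = p.card := ((mem_powersetCard.mp (hS hp)).2).symm
    _ ≤ (S.sup id).card := card_le_card (le_sup (f := id) hp)

section Hb

variable {d : ℕ}

def coreEdge (d : ℕ) : Finset (Vb d) := univ.image Sum.inl

lemma Hb_eq_insert_coreEdge (d : ℕ) :
    Hb d = insert (coreEdge d) ((univ.powersetCard 2).image (hEdge d)) := rfl

@[simp]
lemma inl_mem_hEdge {p : Finset (Fin d)} {i : Fin d} :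
    (Sum.inl i : Vb d) ∈ hEdge d p ↔ i ∈ p := by
  simp [hEdge]

@[simp]
lemma inr_mem_hEdge {p q : Finset (Fin d)} {k : Fin (d - 2)} :
    (Sum.inr (q, k) : Vb d) ∈ hEdge d p ↔ q = p := by
  simp [hEdge, Prod.ext_iff, eq_comm]

lemma card_coreEdge : (coreEdge d).card = d := by
  simp [coreEdge, card_image_of_injective _ Sum.inl_injective]

lemma card_hEdge (p : Finset (Fin d)) : (hEdge d p).card = p.card + (d - 2) := by
  rw [hEdge, card_union_of_disjoint (by simp [disjoint_left]),
    card_image_of_injective _ Sum.inl_injective,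
    card_image_of_injective _ (fun a b h => by simpa using h), card_univ, Fintype.card_fin]

lemma card_eq_of_mem_Hb (hd : 2 ≤ d) {h : Finset (Vb d)} (hh : h ∈ Hb d) : h.card = d := by
  rw [Hb_eq_insert_coreEdge, mem_insert, mem_image] at hh
  rcases hh with rfl | ⟨p, hp, rfl⟩
  · exact card_coreEdge
  · rw [card_hEdge, (mem_powersetCard.mp hp).2]
    omega

/-- `hEdge d p` is determined by its private vertices, which exist once `d ≥ 3`. -/
lemma hEdge_injective (hd : 3 ≤ d) : Function.Injective (hEdge d) := by
  intro p q h
  have : (Sum.inr (p, ⟨0, by omega⟩) : Vb d) ∈ hEdge d q := h ▸ inr_mem_hEdge.mpr rfl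
  exact inr_mem_hEdge.mp this

lemma coreEdge_notMem_image_hEdge (hd : 3 ≤ d) (S : Finset (Finset (Fin d))) :
    coreEdge d ∉ S.image (hEdge d) := by
  rintro h
  obtain ⟨p, -, hp⟩ := mem_image.mp h
  have : (Sum.inr (p, ⟨0, by omega⟩) : Vb d) ∈ coreEdge d := hp ▸ inr_mem_hEdge.mpr rfl
  simp [coreEdge] at this

lemma sup_image_hEdge (S : Finset (Finset (Fin d))) :
    (S.image (hEdge d)).sup id = (S.sup id).disjSum (S ×ˢ univ) := by
  ext (i | ⟨q, k⟩) <;> simp [mem_sup]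

lemma sup_insert_coreEdge (S : Finset (Finset (Fin d))) :
    (insert (coreEdge d) (S.image (hEdge d))).sup id = univ.disjSum (S ×ˢ univ) := by
  ext (i | ⟨q, k⟩) <;> simp [mem_sup, coreEdge]

lemma card_sup_image_hEdge (S : Finset (Finset (Fin d))) :
    ((S.image (hEdge d)).sup id).card = (S.sup id).card + S.card * (d - 2) := by
  rw [sup_image_hEdge, card_disjSum, card_product, card_univ, Fintype.card_fin]

lemma card_sup_insert_coreEdge (S : Finset (Finset (Fin d))) :
    ((insert (coreEdge d) (S.image (hEdge d))).sup id).card = d + S.card * (d - 2) := by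
  rw [sup_insert_coreEdge, card_disjSum, card_product, card_univ, card_univ, Fintype.card_fin,
    Fintype.card_fin]

lemma card_insert_coreEdge (hd : 3 ≤ d) (S : Finset (Finset (Fin d))) :
    (insert (coreEdge d) (S.image (hEdge d))).card = S.card + 1 := by
  rw [card_insert_of_notMem (coreEdge_notMem_image_hEdge hd S),
    card_image_of_injective _ (hEdge_injective hd)]

lemma exists_image_hEdge_eq_erase_coreEdge {K' : Finset (Finset (Vb d))} (hK' : K' ⊆ Hb d) :
    ∃ S ⊆ univ.powersetCard 2, S.image (hEdge d) = K'.erase (coreEdge d) :=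
  subset_image_iff.mp (subset_insert_iff.mp hK')

end Hb

/-- `H_b` is `d`-uniform, has `C(d,2)+1` hyperedges and `d + C(d,2)(d-2)` vertices, and
its edge-to-vertex ratio attains the maximum `m(H_b)` over all nonempty
sub-hypergraphs. -/
theorem Hb_counts_and_density (d : ℕ) (hd : 3 ≤ d) :
    (∀ h ∈ Hb d, h.card = d) ∧
    (Hb d).card = d.choose 2 + 1 ∧
    ((Hb d).sup id).card = d + d.choose 2 * (d - 2) ∧
    (∀ K' ⊆ Hb d, K'.Nonempty →
      (K'.card : ℚ) / ((K'.sup id).card : ℚ)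
        ≤ ((Hb d).card : ℚ) / (((Hb d).sup id).card : ℚ)) := by
  have hpairs : (univ.powersetCard 2 : Finset (Finset (Fin d))).card = d.choose 2 := by simp
  have hcard : (Hb d).card = d.choose 2 + 1 := by
    rw [Hb_eq_insert_coreEdge, card_insert_coreEdge hd, hpairs]
  have hsup : ((Hb d).sup id).card = d + d.choose 2 * (d - 2) := by
    rw [Hb_eq_insert_coreEdge, card_sup_insert_coreEdge, hpairs]
  refine ⟨fun _ => card_eq_of_mem_Hb (by omega), hcard, hsup, fun K' hK' hne => ?_⟩
  obtain ⟨S, hS, hK'S⟩ := exists_image_hEdge_eq_erase_coreEdge hK'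
  have hSN : S.card ≤ d.choose 2 := hpairs ▸ card_le_card hS
  rw [hcard, hsup]
  by_cases hcore : coreEdge d ∈ K'
  · rw [← insert_erase hcore, ← hK'S, card_insert_coreEdge hd, card_sup_insert_coreEdge]
    exact succ_div_add_mul_le (by omega) (by omega) hSN
  · rw [← erase_eq_of_notMem hcore, ← hK'S] at hne ⊢
    rw [card_image_of_injective _ (hEdge_injective hd), card_sup_image_hEdge]
    exact div_add_mul_le (by omega) (by omega)
      (le_card_sup_of_subset_powersetCard hS (image_nonempty.mp hne)) hSN
end
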